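/- For every n ≥ 1 and every μ ∈ wcomp_{n−1} there is a bijection Lyn_μ ≅ Comb_μ; in particular |Lyn_μ| = |Comb_μ|. -/

import Mathlib

/-! Colored labeled binary trees.  Leaf labels are positive integers; colors are
natural numbers (the paper's color set ℙ = {1,2,…} is identified with ℕ via j ↦ j-1,
i.e. color index `i : ℕ` represents the paper's color `i+1`). -/

inductive CTree : Type
  | leaf (label : ℕ) : CTree
  | node (color : ℕ) (l r : CTree) : CTree
deriving DecidableEq

namespace CTree

/-- leaf labels from left to right -/
def leavesList : CTree → List ℕ
  | leaf m => [m]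
  | node _ l r => leavesList l ++ leavesList r

/-- the valency `v(x)`: smallest leaf label of the subtree -/
def minLeaf : CTree → ℕ
  | leaf m => m
  | node _ l r => min (minLeaf l) (minLeaf r)

/-- a tree is normalized if in every subtree the leftmost leaf carries the
smallest leaf label of the subtree. -/
def Normalized : CTree → Prop
  | leaf _ => True
  | node _ l r => Normalized l ∧ Normalized r ∧ minLeaf l < minLeaf r

/-- number of internal nodes with color `j` -/
def colorCount : CTree → ℕ → ℕ
  | leaf _, _ => 0
  | node c l r, j => (if c = j then 1 else 0) + colorCount l j + colorCount r j

def isLeafB : CTree → Bool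
  | leaf _ => true
  | node _ _ _ => false

def left : CTree → CTree
  | leaf m => leaf m
  | node _ l _ => l

def right : CTree → CTree
  | leaf m => leaf m
  | node _ _ r => r

def rootColor : CTree → ℕ
  | leaf _ => 0
  | node c _ _ => c

/-- the root of `T` is a Lyndon node: either the left child is a leaf
or `v(R(L(x))) > v(R(x))`. (Leaves count as Lyndon.) -/
def RootLyndonB (T : CTree) : Bool :=
  isLeafB T || isLeafB (left T) || decide (minLeaf (right T) < minLeaf (right (left T)))

/-- colored Lyndon condition: every internal node that is not a Lyndon node
satisfies `color(L(x)) > color(x)` -/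
def LynColored : CTree → Prop
  | leaf _ => True
  | node c l r => LynColored l ∧ LynColored r ∧
      (RootLyndonB (node c l r) = true ∨ c < rootColor l)

/-- colored comb condition: every internal node whose right child is internal
satisfies `color(x) > color(R(x))` -/
def CombColored : CTree → Prop
  | leaf _ => True
  | node c l r => CombColored l ∧ CombColored r ∧ (isLeafB r = true ∨ rootColor r < c)

/-- all colors equal to `0`: an (essentially) uncolored tree. -/
def Mono : CTree → Prop
  | leaf _ => True
  | node c l r => c = 0 ∧ Mono l ∧ Mono r

/-- the tree has leaf label set `[n] = {1,…,n}` (each label once) -/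
def OnSet (n : ℕ) (T : CTree) : Prop := T.leavesList.Perm ((List.range n).map (· + 1))

/-- `lynAux T = (b, m)`: `b` is the size of the block of `π^{Lyn}` containing the
root (`0` for a leaf) and `m` is the multiset of sizes of the other blocks. -/
def lynAux : CTree → ℕ × Multiset ℕ
  | leaf _ => (0, 0)
  | node c l r =>
    let bl := (lynAux l).1
    let ml := (lynAux l).2
    let br := (lynAux r).1
    let mr := (lynAux r).2
    let closedR := mr + (if br = 0 then 0 else {br})
    if RootLyndonB (node c l r) then
      (1, ml + (if bl = 0 then 0 else {bl}) + closedR)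
    else (1 + bl, ml + closedR)

/-- the Lyndon type `λ^{Lyn}`: multiset of block sizes of `π^{Lyn}` -/
def lynType (T : CTree) : Multiset ℕ :=
  (if (lynAux T).1 = 0 then (0 : Multiset ℕ) else {(lynAux T).1}) + (lynAux T).2

def combAux : CTree → ℕ × Multiset ℕ
  | leaf _ => (0, 0)
  | node _ l r =>
    let bl := (combAux l).1
    let ml := (combAux l).2
    let br := (combAux r).1
    let mr := (combAux r).2
    (1 + br, ml + mr + (if bl = 0 then 0 else {bl}))

/-- the comb type `λ^{Comb}`: multiset of block sizes of `π^{Comb}` -/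
def combType (T : CTree) : Multiset ℕ :=
  (if (combAux T).1 = 0 then (0 : Multiset ℕ) else {(combAux T).1}) + (combAux T).2

/-- subtrees (= nodes) of a tree -/
def subtreesC : CTree → List CTree
  | leaf m => [leaf m]
  | node c l r => node c l r :: (subtreesC l ++ subtreesC r)

end CTree

/-- normalized uncolored labeled binary trees on `[n]`: the set `Nor_n`. -/
def NorSet (n : ℕ) : Set CTree :=
  {T | T.OnSet n ∧ T.Normalized ∧ T.Mono}

/-- `Lyn_μ` for a weak composition `μ` (indexed by ℕ; `μ i` is the number of
internal nodes of color `i`). -/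
def LynSet (n : ℕ) (μ : ℕ →₀ ℕ) : Set CTree :=
  {T | T.OnSet n ∧ T.Normalized ∧ T.LynColored ∧ ∀ j, T.colorCount j = μ j}

/-- `Comb_μ` -/
def CombSet (n : ℕ) (μ : ℕ →₀ ℕ) : Set CTree :=
  {T | T.OnSet n ∧ T.Normalized ∧ T.CombColored ∧ ∀ j, T.colorCount j = μ j}

/-- `Lyn_μ` for `μ ∈ wcomp` with support in `[k]`, given as `f : Fin k → ℕ`. -/
def LynSetF (n k : ℕ) (f : Fin k → ℕ) : Set CTree :=
  {T | T.OnSet n ∧ T.Normalized ∧ T.LynColored ∧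
    ∀ j : ℕ, T.colorCount j = if h : j < k then f ⟨j, h⟩ else 0}

def CombSetF (n k : ℕ) (f : Fin k → ℕ) : Set CTree :=
  {T | T.OnSet n ∧ T.Normalized ∧ T.CombColored ∧
    ∀ j : ℕ, T.colorCount j = if h : j < k then f ⟨j, h⟩ else 0}

/-! Interpolate between the two conditions. Call `key x := v(R(x))`; in a normalized tree with
distinct leaves distinct internal nodes have distinct keys. For a threshold `k`, `Hyb k` imposes
the Lyndon condition at the nodes whose left child has key `< k` and the comb condition at the
nodes whose own key is `≥ k`, so `Hyb 0` is the comb condition and, on `[n]`, `Hyb (n + 1)` is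
the Lyndon condition. Lowering the threshold from `q + 1` to `q` concerns only the node keyed
`q`: `sinkAt q` rotates it down its right spine until the comb condition holds there, and
`liftAt q` rotates it back up while the Lyndon condition fails at its parent. These rotations
keep leaves, colors and normalization, and are mutually inverse between `Hyb (q + 1)` and
`Hyb q`; composing them for `q = n, …, 0` gives the bijection. -/

namespace CTree

attribute [simp] leavesList minLeaf Normalized colorCount left right rootColor isLeafB

lemma minLeaf_mem (t : CTree) : t.minLeaf ∈ t.leavesList := by
  induction t with
  | leaf m => simp
  | node c l r ihl ihr =>
      rcases min_choice l.minLeaf r.minLeaf with h | h <;> simp [h, ihl, ihr]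

lemma minLeaf_le {t : CTree} {v : ℕ} (hv : v ∈ t.leavesList) : t.minLeaf ≤ v := by
  induction t with
  | leaf m => simp_all
  | node c l r ihl ihr =>
      simp only [leavesList, List.mem_append] at hv
      rcases hv with hv | hv
      · exact (min_le_left _ _).trans (ihl hv)
      · exact (min_le_right _ _).trans (ihr hv)

lemma minLeaf_eq_of_leavesList_eq {t t' : CTree} (h : t'.leavesList = t.leavesList) :
    t'.minLeaf = t.minLeaf :=
  le_antisymm (minLeaf_le (h ▸ minLeaf_mem t)) (minLeaf_le (h ▸ minLeaf_mem t'))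

lemma nodup_node_iff {c : ℕ} {l r : CTree} : (node c l r).leavesList.Nodup ↔
    l.leavesList.Nodup ∧ r.leavesList.Nodup ∧ l.leavesList.Disjoint r.leavesList :=
  List.nodup_append'

def key (t : CTree) : ℕ := t.right.minLeaf

@[simp] lemma key_leaf {m : ℕ} : key (leaf m) = m := rfl

@[simp] lemma key_node {c : ℕ} {l r : CTree} : key (node c l r) = r.minLeaf := rfl

lemma key_mem (t : CTree) : key t ∈ t.leavesList := by
  cases t with
  | leaf m => simp
  | node c l r => simp [minLeaf_mem r]

lemma Normalized.minLeaf_node {c : ℕ} {l r : CTree} (h : (node c l r).Normalized) :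
    (node c l r).minLeaf = l.minLeaf :=
  min_eq_left h.2.2.le

/-- The Lyndon condition at a node of color `c` with left child `l`, `v` being the valency of the
right child. -/
def LynCond (c : ℕ) : CTree → ℕ → Prop
  | leaf _, _ => True
  | node c' _ B, v => v < B.minLeaf ∨ c < c'

def CombCond (c : ℕ) : CTree → Prop
  | leaf _ => True
  | node c' _ _ => c' < c

def Hyb (k : ℕ) : CTree → Prop
  | leaf _ => True
  | node c l r =>
      Hyb k l ∧ Hyb k r ∧ (key l < k → LynCond c l r.minLeaf) ∧ (k ≤ r.minLeaf → CombCond c r)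

@[simp] lemma hyb_leaf {k m : ℕ} : Hyb k (leaf m) := trivial

lemma hyb_zero_iff (t : CTree) : Hyb 0 t ↔ t.CombColored := by
  induction t with
  | leaf m => simp [CombColored]
  | node c l r ihl ihr =>
      have hcomb : CombCond c r ↔ r.isLeafB = true ∨ r.rootColor < c := by
        cases r <;> simp [CombCond]
      simp [Hyb, CombColored, ihl, ihr, hcomb]

lemma hyb_iff_lynColored {k : ℕ} (t : CTree) (ht : ∀ v ∈ t.leavesList, v < k) :
    Hyb k t ↔ t.LynColored := by
  induction t with
  | leaf m => simp [LynColored]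
  | node c l r ihl ihr =>
      simp only [leavesList, List.mem_append] at ht
      have hl : key l < k := ht _ (.inl (key_mem l))
      have hr : ¬ k ≤ r.minLeaf := not_le.mpr (ht _ (.inr (minLeaf_mem r)))
      have hlyn : LynCond c l r.minLeaf ↔ RootLyndonB (node c l r) = true ∨ c < l.rootColor := by
        simp only [RootLyndonB, Bool.or_eq_true, decide_eq_true_iff]
        cases l <;> simp [LynCond]
      simp [Hyb, LynColored, ihl (fun v hv => ht v (.inl hv)), ihr (fun v hv => ht v (.inr hv)),
        hl, hr, hlyn]

lemma hyb_succ_iff_of_not_mem {q : ℕ} (t : CTree) (hq : q ∉ t.leavesList) :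
    Hyb (q + 1) t ↔ Hyb q t := by
  induction t with
  | leaf m => simp
  | node c l r ihl ihr =>
      simp only [leavesList, List.mem_append, not_or] at hq
      have hl : key l ≠ q := fun h => hq.1 (h ▸ key_mem l)
      have hr : r.minLeaf ≠ q := fun h => hq.2 (h ▸ minLeaf_mem r)
      have hlt : key l < q + 1 ↔ key l < q := by omega
      have hle : q + 1 ≤ r.minLeaf ↔ q ≤ r.minLeaf := by omega
      simp only [Hyb, ihl hq.1, ihr hq.2, hlt, hle]

/-- Below the node keyed `q` no left child has key `≤ q`, so only the comb condition matters. -/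
lemma hyb_succ_iff_of_le {q : ℕ} (t : CTree) (hn : t.Normalized)
    (hq : ∀ v ∈ t.leavesList, q ≤ v) : Hyb (q + 1) t ↔ Hyb q t := by
  induction t with
  | leaf m => simp
  | node c l r ihl ihr =>
      simp only [leavesList, List.mem_append] at hq
      have hql : q ≤ l.minLeaf := hq _ (.inl (minLeaf_mem l))
      have hle : q + 1 ≤ r.minLeaf ↔ q ≤ r.minLeaf := by have := hn.2.2; omega
      have hlyn : (key l < q + 1 → LynCond c l r.minLeaf) ↔
          (key l < q → LynCond c l r.minLeaf) := by
        cases l with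
        | leaf m => simp [LynCond]
        | node c' A B =>
            have : q < key (node c' A B) := by have := hn.1.2.2; simp at hql ⊢; omega
            constructor <;> intro _ h <;> omega
      simp only [Hyb, ihl hn.1 (fun v hv => hq v (.inl hv)),
        ihr hn.2.1 (fun v hv => hq v (.inr hv)), hlyn, hle]

/-- Rotates the root down the right spine of `B` while the comb condition fails at it. -/
def sink (c : ℕ) (A : CTree) : CTree → CTree
  | leaf m => node c A (leaf m)
  | node cb B₁ B₂ => if c ≤ cb then node cb (sink c A B₁) B₂ else node c A (node cb B₁ B₂)

/-- The inverse rotation at a node `node c l r`, performed when `l` is the node keyed `q` and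
the Lyndon condition fails. -/
def rotateUp (q c : ℕ) (l r : CTree) : CTree :=
  match l with
  | leaf _ => node c l r
  | node c' A B =>
      if B.minLeaf = q ∧ q < r.minLeaf ∧ c' ≤ c then node c' A (node c B r) else node c l r

def liftAt (q : ℕ) : CTree → CTree
  | leaf m => leaf m
  | node c l r =>
      if r.minLeaf = q then node c l r
      else if q ∈ l.leavesList then rotateUp q c (liftAt q l) r
      else node c l (liftAt q r)

def sinkAt (q : ℕ) : CTree → CTree
  | leaf m => leaf m
  | node c l r =>
      if r.minLeaf = q then sink c l r
      else if q ∈ l.leavesList then node c (sinkAt q l) r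
      else node c l (sinkAt q r)

lemma liftAt_node (q c : ℕ) (l r : CTree) : liftAt q (node c l r) =
    if r.minLeaf = q then node c l r
    else if q ∈ l.leavesList then rotateUp q c (liftAt q l) r
    else node c l (liftAt q r) := rfl

lemma sinkAt_node (q c : ℕ) (l r : CTree) : sinkAt q (node c l r) =
    if r.minLeaf = q then sink c l r
    else if q ∈ l.leavesList then node c (sinkAt q l) r
    else node c l (sinkAt q r) := rfl

lemma leavesList_sink (c : ℕ) (A B : CTree) :
    (sink c A B).leavesList = A.leavesList ++ B.leavesList := by
  induction B with
  | leaf m => simp [sink]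
  | node cb B₁ B₂ ih₁ _ => unfold sink; split_ifs <;> simp [ih₁]

lemma colorCount_sink (c : ℕ) (A B : CTree) (j : ℕ) :
    (sink c A B).colorCount j = (node c A B).colorCount j := by
  induction B with
  | leaf m => simp [sink]
  | node cb B₁ B₂ ih₁ _ =>
      unfold sink
      split_ifs <;> simp [ih₁]
      omega

lemma Normalized.sink {c : ℕ} {A B : CTree} (h : (node c A B).Normalized) :
    (sink c A B).Normalized := by
  induction B with
  | leaf m => exact h
  | node cb B₁ B₂ ih₁ _ =>
      obtain ⟨hA, ⟨hB₁, hB₂, hB⟩, hAB⟩ := h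
      simp only [minLeaf, lt_min_iff] at hAB
      unfold CTree.sink
      split_ifs
      · refine ⟨ih₁ ⟨hA, hB₁, hAB.1⟩, hB₂, ?_⟩
        rw [minLeaf_eq_of_leavesList_eq (t := node c A B₁) (leavesList_sink c A B₁)]
        simp only [minLeaf, min_lt_iff]
        exact .inr hB
      · exact ⟨hA, ⟨hB₁, hB₂, hB⟩, by simp [hAB]⟩

lemma minLeaf_le_key_sink (c : ℕ) (A : CTree) {B : CTree} (hB : B.Normalized) :
    B.minLeaf ≤ key (sink c A B) := by
  cases B with
  | leaf m => simp [sink]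
  | node cb B₁ B₂ =>
      unfold sink
      split_ifs
      · simp [hB.2.2.le]
      · simp

lemma sink_of_combCond {c : ℕ} {A B : CTree} (h : CombCond c B) : sink c A B = node c A B := by
  cases B with
  | leaf m => rfl
  | node cb B₁ B₂ => simp only [CombCond] at h; simp [sink, not_le.mpr h]

lemma leavesList_rotateUp (q c : ℕ) (l r : CTree) :
    (rotateUp q c l r).leavesList = l.leavesList ++ r.leavesList := by
  unfold rotateUp; split <;> (try split_ifs) <;> simp

lemma colorCount_rotateUp (q c : ℕ) (l r : CTree) (j : ℕ) :
    (rotateUp q c l r).colorCount j = (node c l r).colorCount j := by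
  unfold rotateUp
  split
  · simp
  · split_ifs
    · simp; omega
    · simp

lemma Normalized.rotateUp {q c : ℕ} {l r : CTree} (h : (node c l r).Normalized) :
    (rotateUp q c l r).Normalized := by
  unfold CTree.rotateUp
  split
  · exact h
  · split_ifs with hrot
    · obtain ⟨⟨hA, hB, hAB⟩, hr, -⟩ := h
      obtain ⟨hBq, hqr, -⟩ := hrot
      exact ⟨hA, ⟨hB, hr, by omega⟩, by simp; omega⟩
    · exact h

lemma leavesList_liftAt (q : ℕ) (t : CTree) : (liftAt q t).leavesList = t.leavesList := by
  induction t with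
  | leaf m => rfl
  | node c l r ihl ihr => rw [liftAt_node]; split_ifs <;> simp [leavesList_rotateUp, ihl, ihr]

lemma leavesList_sinkAt (q : ℕ) (t : CTree) : (sinkAt q t).leavesList = t.leavesList := by
  induction t with
  | leaf m => rfl
  | node c l r ihl ihr => rw [sinkAt_node]; split_ifs <;> simp [leavesList_sink, ihl, ihr]

lemma minLeaf_liftAt (q : ℕ) (t : CTree) : (liftAt q t).minLeaf = t.minLeaf :=
  minLeaf_eq_of_leavesList_eq (leavesList_liftAt q t)

lemma minLeaf_sinkAt (q : ℕ) (t : CTree) : (sinkAt q t).minLeaf = t.minLeaf :=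
  minLeaf_eq_of_leavesList_eq (leavesList_sinkAt q t)

lemma colorCount_liftAt (q : ℕ) (t : CTree) (j : ℕ) :
    (liftAt q t).colorCount j = t.colorCount j := by
  induction t with
  | leaf m => rfl
  | node c l r ihl ihr => rw [liftAt_node]; split_ifs <;> simp [colorCount_rotateUp, ihl, ihr]

lemma colorCount_sinkAt (q : ℕ) (t : CTree) (j : ℕ) :
    (sinkAt q t).colorCount j = t.colorCount j := by
  induction t with
  | leaf m => rfl
  | node c l r ihl ihr => rw [sinkAt_node]; split_ifs <;> simp [colorCount_sink, ihl, ihr]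

lemma Normalized.liftAt {t : CTree} (q : ℕ) (h : t.Normalized) : (liftAt q t).Normalized := by
  induction t with
  | leaf m => trivial
  | node c l r ihl ihr =>
      rw [liftAt_node]
      split_ifs
      · exact h
      · exact Normalized.rotateUp ⟨ihl h.1, h.2.1, minLeaf_liftAt q l ▸ h.2.2⟩
      · exact ⟨h.1, ihr h.2.1, minLeaf_liftAt q r ▸ h.2.2⟩

lemma Normalized.sinkAt {t : CTree} (q : ℕ) (h : t.Normalized) : (sinkAt q t).Normalized := by
  induction t with
  | leaf m => trivial
  | node c l r ihl ihr =>
      rw [sinkAt_node]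
      split_ifs
      · exact h.sink
      · exact ⟨ihl h.1, h.2.1, minLeaf_sinkAt q l ▸ h.2.2⟩
      · exact ⟨h.1, ihr h.2.1, minLeaf_sinkAt q r ▸ h.2.2⟩

lemma liftAt_of_not_mem {q : ℕ} {t : CTree} (hq : q ∉ t.leavesList) : liftAt q t = t := by
  induction t with
  | leaf m => rfl
  | node c l r _ ihr =>
      simp only [leavesList, List.mem_append, not_or] at hq
      have hr : r.minLeaf ≠ q := fun h => hq.2 (h ▸ minLeaf_mem r)
      simp [liftAt, hr, hq.1, ihr hq.2]

lemma sinkAt_of_not_mem {q : ℕ} {t : CTree} (hq : q ∉ t.leavesList) : sinkAt q t = t := by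
  induction t with
  | leaf m => rfl
  | node c l r _ ihr =>
      simp only [leavesList, List.mem_append, not_or] at hq
      have hr : r.minLeaf ≠ q := fun h => hq.2 (h ▸ minLeaf_mem r)
      simp [sinkAt, hr, hq.1, ihr hq.2]

def SameRoot (t t' : CTree) : Prop :=
  t.isLeafB = t'.isLeafB ∧ t.rootColor = t'.rootColor ∧ key t = key t'

lemma sameRoot_node (c : ℕ) (l l' : CTree) {r r' : CTree} (h : r'.minLeaf = r.minLeaf) :
    SameRoot (node c l' r') (node c l r) :=
  ⟨rfl, rfl, h⟩

lemma SameRoot.lynCond_iff {l l' : CTree} (h : SameRoot l' l) {c v : ℕ} :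
    LynCond c l' v ↔ LynCond c l v := by
  cases l <;> cases l' <;> simp_all [SameRoot, LynCond]

lemma key_rotateUp_eq_or_sameRoot (q c : ℕ) (l r : CTree) :
    key (rotateUp q c l r) = q ∨ SameRoot (rotateUp q c l r) (node c l r) := by
  unfold rotateUp
  split
  · exact .inr (sameRoot_node c _ _ rfl)
  · split_ifs with hrot
    · left; simp; omega
    · exact .inr (sameRoot_node c _ _ rfl)

lemma key_liftAt_eq_or_sameRoot (q : ℕ) (t : CTree) :
    key (liftAt q t) = q ∨ SameRoot (liftAt q t) t := by
  cases t with
  | leaf m => exact .inr ⟨rfl, rfl, rfl⟩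
  | node c l r =>
      rw [liftAt_node]
      split_ifs
      · exact .inr (sameRoot_node c _ _ rfl)
      · exact key_rotateUp_eq_or_sameRoot q c _ r
      · exact .inr (sameRoot_node c _ _ (minLeaf_liftAt q r))

lemma le_key_sinkAt_or_sameRoot (q : ℕ) {t : CTree} (hn : t.Normalized) :
    q ≤ key (sinkAt q t) ∨ SameRoot (sinkAt q t) t := by
  cases t with
  | leaf m => exact .inr ⟨rfl, rfl, rfl⟩
  | node c l r =>
      rw [sinkAt_node]
      split_ifs with hrq
      · exact .inl (hrq ▸ minLeaf_le_key_sink c l hn.2.1)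
      · exact .inr (sameRoot_node c _ _ rfl)
      · exact .inr (sameRoot_node c _ _ (minLeaf_sinkAt q r))

lemma rotateUp_eq_node {q c : ℕ} {l r : CTree} (h : key l = q → LynCond c l r.minLeaf) :
    rotateUp q c l r = node c l r := by
  unfold rotateUp
  split
  · rfl
  · rename_i c' A B
    rw [if_neg]
    rintro ⟨hBq, hqr, hc⟩
    have := h hBq
    simp only [LynCond] at this
    omega

lemma sinkAt_rotateUp {q c : ℕ} {l r : CTree} (hl : q ∈ l.leavesList) (hr : r.minLeaf ≠ q) :
    sinkAt q (rotateUp q c l r) = node c (sinkAt q l) r := by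
  unfold rotateUp
  split
  · rw [sinkAt_node, if_neg hr, if_pos hl]
  · rename_i c' A B
    split_ifs with hrot
    · obtain ⟨hBq, hqr, hc⟩ := hrot
      have hmin : (node c B r).minLeaf = q := by simp; omega
      rw [sinkAt_node, if_pos hmin, sink, if_pos hc, sinkAt_node, if_pos hBq]
    · rw [sinkAt_node, if_neg hr, if_pos hl]

lemma liftAt_sink {q c : ℕ} {A B : CTree} (hB : B.Normalized) (hq : B.minLeaf = q) :
    liftAt q (sink c A B) = node c A B := by
  induction B with
  | leaf m => simp_all [sink, liftAt]
  | node cb B₁ B₂ ih₁ _ =>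
      have hB₁ : B₁.minLeaf = q := hB.minLeaf_node ▸ hq
      have hqB₂ : q < B₂.minLeaf := hB₁ ▸ hB.2.2
      unfold sink
      split_ifs with hc
      · have hmem : q ∈ (sink c A B₁).leavesList := by
          simp [leavesList_sink, ← hB₁, minLeaf_mem]
        rw [liftAt_node, if_neg hqB₂.ne', if_pos hmem, ih₁ hB.1 hB₁]
        simp [rotateUp, hB₁, hqB₂, hc]
      · rw [liftAt_node, if_pos hq]

lemma sinkAt_liftAt {q : ℕ} {t : CTree} (h : Hyb q t) : sinkAt q (liftAt q t) = t := by
  induction t with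
  | leaf m => rfl
  | node c l r ihl ihr =>
      obtain ⟨hl, hr, -, hcomb⟩ := h
      rw [liftAt_node]
      split_ifs with hrq hql
      · rw [sinkAt_node, if_pos hrq, sink_of_combCond (hcomb hrq.ge)]
      · rw [sinkAt_rotateUp (leavesList_liftAt q l ▸ hql) hrq, ihl hl]
      · rw [sinkAt_node, if_neg (minLeaf_liftAt q r ▸ hrq), if_neg hql, ihr hr]

lemma liftAt_sinkAt {q : ℕ} {t : CTree} (hn : t.Normalized) (h : Hyb (q + 1) t) :
    liftAt q (sinkAt q t) = t := by
  induction t with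
  | leaf m => rfl
  | node c l r ihl ihr =>
      obtain ⟨hl, hr, hlyn, -⟩ := h
      rw [sinkAt_node]
      split_ifs with hrq hql
      · exact liftAt_sink hn.2.1 hrq
      · rw [liftAt_node, if_neg hrq, if_pos (leavesList_sinkAt q l ▸ hql), ihl hn.1 hl,
          rotateUp_eq_node fun hk => hlyn (by omega)]
      · rw [liftAt_node, if_neg (minLeaf_sinkAt q r ▸ hrq), if_neg hql, ihr hn.2.1 hr]

lemma hyb_node_iff_of_key_eq {q c : ℕ} {l r : CTree} (hn : (node c l r).Normalized)
    (hd : (node c l r).leavesList.Nodup) (hq : r.minLeaf = q) :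
    Hyb q (node c l r) ↔ Hyb (q + 1) (node c l r) ∧ CombCond c r := by
  have hql : q ∉ l.leavesList := fun h => (nodup_node_iff.mp hd).2.2 h (hq ▸ minLeaf_mem r)
  have hkl : key l ≠ q := fun h => hql (h ▸ key_mem l)
  simp only [Hyb, hyb_succ_iff_of_not_mem l hql,
    hyb_succ_iff_of_le r hn.2.1 fun v hv => hq ▸ minLeaf_le hv]
  constructor
  · rintro ⟨hl, hr, hlyn, hcomb⟩
    exact ⟨⟨hl, hr, fun h => hlyn (by omega), fun h => by omega⟩, hcomb hq.ge⟩
  · rintro ⟨⟨hl, hr, hlyn, -⟩, hc⟩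
    exact ⟨hl, hr, fun h => hlyn (by omega), fun _ => hc⟩

lemma hyb_rotateUp {q c : ℕ} {l r : CTree} (hn : l.Normalized) (hl : Hyb (q + 1) l)
    (hr : Hyb (q + 1) r) (hrq : r.minLeaf ≠ q) (hlyn : key l < q → LynCond c l r.minLeaf)
    (hcomb : q ≤ r.minLeaf → CombCond c r) : Hyb (q + 1) (rotateUp q c l r) := by
  unfold rotateUp
  split
  · exact ⟨trivial, hr, fun _ => trivial, fun h => hcomb (by omega)⟩
  · rename_i c' A B
    split_ifs with hrot
    · obtain ⟨hA, hB, hlynA, -⟩ := hl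
      obtain ⟨hBq, hqr, hc⟩ := hrot
      have hlynB : key B < q + 1 → LynCond c B r.minLeaf := by
        cases B with
        | leaf m => exact fun _ => trivial
        | node cB B₁ B₂ => have := hn.2.1.2.2; simp at hBq ⊢; omega
      have hmin : (node c B r).minLeaf = B.minLeaf := by simp; omega
      exact ⟨hA, ⟨hB, hr, hlynB, fun h => hcomb (by omega)⟩, hmin ▸ hlynA,
        fun h => by simp at h; omega⟩
    · refine ⟨hl, hr, fun hk => ?_, fun h => hcomb (by omega)⟩
      by_cases hBq : B.minLeaf = q
      · simp only [LynCond]; omega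
      · exact hlyn (by simp at hk ⊢; omega)

theorem hyb_liftAt {q : ℕ} {t : CTree} (hn : t.Normalized) (hd : t.leavesList.Nodup)
    (h : Hyb q t) : Hyb (q + 1) (liftAt q t) := by
  induction t with
  | leaf m => trivial
  | node c l r ihl ihr =>
      obtain ⟨hdl, hdr, hdisj⟩ := nodup_node_iff.mp hd
      obtain ⟨hl, hr, hlyn, hcomb⟩ := h
      rw [liftAt_node]
      split_ifs with hrq hql
      · exact ((hyb_node_iff_of_key_eq hn hd hrq).mp ⟨hl, hr, hlyn, hcomb⟩).1
      · have hqr : q ∉ r.leavesList := fun hq => hdisj hql hq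
        refine hyb_rotateUp (hn.1.liftAt q) (ihl hn.1 hdl hl)
          ((hyb_succ_iff_of_not_mem r hqr).mpr hr) hrq (fun hk => ?_) hcomb
        rcases key_liftAt_eq_or_sameRoot q l with hkq | hsame
        · omega
        · exact hsame.lynCond_iff.mpr (hlyn (hsame.2.2 ▸ hk))
      · have hkl : key l ≠ q := fun h => hql (h ▸ key_mem l)
        refine ⟨(hyb_succ_iff_of_not_mem l hql).mpr hl, ihr hn.2.1 hdr hr, ?_, ?_⟩
        · rw [minLeaf_liftAt]
          exact fun h => hlyn (by omega)
        · rw [minLeaf_liftAt]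
          intro h
          have hqr : q ∉ r.leavesList := fun hq => by have := minLeaf_le hq; omega
          rw [liftAt_of_not_mem hqr]
          exact hcomb (by omega)

lemma hyb_sink {q c : ℕ} {A B : CTree} (hn : (node c A B).Normalized)
    (hd : (node c A B).leavesList.Nodup) (hq : B.minLeaf = q) (h : Hyb (q + 1) (node c A B)) :
    Hyb q (sink c A B) := by
  induction B with
  | leaf m => exact (hyb_node_iff_of_key_eq hn hd hq).mpr ⟨h, trivial⟩
  | node cb B₁ B₂ ih₁ _ =>
      unfold sink
      split_ifs with hc
      · have hB₁ : B₁.minLeaf = q := hn.2.1.minLeaf_node ▸ hq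
        have hqB₂ : q < B₂.minLeaf := hB₁ ▸ hn.2.1.2.2
        have hqB₂' : q ∉ B₂.leavesList := fun h =>
          (nodup_node_iff.mp (nodup_node_iff.mp hd).2.1).2.2 (hB₁ ▸ minLeaf_mem B₁) h
        obtain ⟨hA, ⟨hB₁h, hB₂h, -, hcombB⟩, hlyn, -⟩ := h
        have hd₁ : (node c A B₁).leavesList.Nodup :=
          hd.sublist ((List.sublist_append_left _ _).append_left _)
        have hlyn₁ : key A < q + 1 → LynCond c A B₁.minLeaf := fun hk => by
          have := hlyn hk; rwa [hq, ← hB₁] at this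
        have hkey := minLeaf_le_key_sink c A hn.2.1.1
        exact ⟨ih₁ ⟨hn.1, hn.2.1.1, hB₁ ▸ hq ▸ hn.2.2⟩ hd₁ hB₁ ⟨hA, hB₁h, hlyn₁, by omega⟩,
          (hyb_succ_iff_of_not_mem B₂ hqB₂').mp hB₂h, by omega, fun _ => hcombB (by omega)⟩
      · exact (hyb_node_iff_of_key_eq hn hd hq).mpr ⟨h, by simp only [CombCond]; omega⟩

theorem hyb_sinkAt {q : ℕ} {t : CTree} (hn : t.Normalized) (hd : t.leavesList.Nodup)
    (h : Hyb (q + 1) t) : Hyb q (sinkAt q t) := by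
  induction t with
  | leaf m => trivial
  | node c l r ihl ihr =>
      obtain ⟨hdl, hdr, hdisj⟩ := nodup_node_iff.mp hd
      rw [sinkAt_node]
      split_ifs with hrq hql
      · exact hyb_sink hn hd hrq h
      · obtain ⟨hl, hr, hlyn, hcomb⟩ := h
        have hqr : q ∉ r.leavesList := fun hq => hdisj hql hq
        refine ⟨ihl hn.1 hdl hl, (hyb_succ_iff_of_not_mem r hqr).mp hr, fun hk => ?_,
          fun h => hcomb (by omega)⟩
        rcases le_key_sinkAt_or_sameRoot q hn.1 with hkq | hsame
        · omega
        · exact hsame.lynCond_iff.mpr (hlyn (by have := hsame.2.2; omega))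
      · obtain ⟨hl, hr, hlyn, hcomb⟩ := h
        refine ⟨(hyb_succ_iff_of_not_mem l hql).mp hl, ihr hn.2.1 hdr hr, ?_, ?_⟩
        · rw [minLeaf_sinkAt]
          exact fun h => hlyn (by omega)
        · rw [minLeaf_sinkAt]
          intro h
          have hqr : q ∉ r.leavesList := fun hq => by have := minLeaf_le hq; omega
          rw [sinkAt_of_not_mem hqr]
          exact hcomb (by omega)

lemma OnSet.nodup {n : ℕ} {T : CTree} (h : T.OnSet n) : T.leavesList.Nodup :=
  h.nodup_iff.mpr (List.nodup_range.map (add_left_injective 1))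

lemma OnSet.lt {n v : ℕ} {T : CTree} (h : T.OnSet n) (hv : v ∈ T.leavesList) : v < n + 1 := by
  have := h.mem_iff.mp hv
  simp only [List.mem_map, List.mem_range] at this
  omega

def HybSet (n : ℕ) (μ : ℕ →₀ ℕ) (k : ℕ) : Set CTree :=
  {T | T.OnSet n ∧ T.Normalized ∧ (∀ j, T.colorCount j = μ j) ∧ Hyb k T}

lemma hybSet_zero (n : ℕ) (μ : ℕ →₀ ℕ) : HybSet n μ 0 = CombSet n μ := by
  ext T
  simp only [HybSet, CombSet, Set.mem_ofPred_eq, hyb_zero_iff]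
  tauto

lemma hybSet_succ_self (n : ℕ) (μ : ℕ →₀ ℕ) : HybSet n μ (n + 1) = LynSet n μ := by
  ext T
  simp only [HybSet, LynSet, Set.mem_ofPred_eq]
  constructor
  · rintro ⟨hon, hn, hμ, h⟩
    exact ⟨hon, hn, (hyb_iff_lynColored T fun _ => hon.lt).mp h, hμ⟩
  · rintro ⟨hon, hn, h, hμ⟩
    exact ⟨hon, hn, hμ, (hyb_iff_lynColored T fun _ => hon.lt).mpr h⟩

lemma sinkAt_mem_hybSet {n q : ℕ} {μ : ℕ →₀ ℕ} {T : CTree} (hT : T ∈ HybSet n μ (q + 1)) :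
    sinkAt q T ∈ HybSet n μ q := by
  obtain ⟨hon, hn, hμ, h⟩ := hT
  exact ⟨by rw [OnSet, leavesList_sinkAt]; exact hon, hn.sinkAt q,
    fun j => (colorCount_sinkAt q T j).trans (hμ j), hyb_sinkAt hn hon.nodup h⟩

lemma liftAt_mem_hybSet {n q : ℕ} {μ : ℕ →₀ ℕ} {T : CTree} (hT : T ∈ HybSet n μ q) :
    liftAt q T ∈ HybSet n μ (q + 1) := by
  obtain ⟨hon, hn, hμ, h⟩ := hT
  exact ⟨by rw [OnSet, leavesList_liftAt]; exact hon, hn.liftAt q,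
    fun j => (colorCount_liftAt q T j).trans (hμ j), hyb_liftAt hn hon.nodup h⟩

lemma bijOn_sinkAt (n : ℕ) (μ : ℕ →₀ ℕ) (q : ℕ) :
    Set.BijOn (sinkAt q) (HybSet n μ (q + 1)) (HybSet n μ q) :=
  Set.InvOn.bijOn
    ⟨fun _ hT => liftAt_sinkAt hT.2.1 hT.2.2.2, fun _ hT => sinkAt_liftAt hT.2.2.2⟩
    (fun _ => sinkAt_mem_hybSet) (fun _ => liftAt_mem_hybSet)

lemma exists_bijOn_hybSet_zero (n : ℕ) (μ : ℕ →₀ ℕ) :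
    ∀ k, ∃ F : CTree → CTree, Set.BijOn F (HybSet n μ k) (HybSet n μ 0)
  | 0 => ⟨id, Set.bijOn_id _⟩
  | k + 1 =>
      let ⟨F, hF⟩ := exists_bijOn_hybSet_zero n μ k
      ⟨F ∘ sinkAt k, hF.comp (bijOn_sinkAt n μ k)⟩

end CTree

theorem lyndon_comb_bijection_general
    (n : ℕ) (μ : ℕ →₀ ℕ) :
    (∃ F : CTree → CTree, Set.BijOn F (LynSet n μ) (CombSet n μ)) ∧
      Nat.card (LynSet n μ) = Nat.card (CombSet n μ) := by
  obtain ⟨F, hF⟩ := CTree.exists_bijOn_hybSet_zero n μ (n + 1)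
  rw [CTree.hybSet_succ_self, CTree.hybSet_zero] at hF
  exact ⟨⟨F, hF⟩, Nat.card_congr (hF.equiv F)⟩

/-- For every `n ≥ 1` and every weak composition `μ ∈ wcomp_{n-1}` (indexed by the
positive colors, i.e. `μ 0 = 0` and color `j ≥ 1` of the paper is color index `j`
here... here we simply require `μ 0 = 0` so that colors form a copy of ℙ),
there is a bijection `Lyn_μ ≅ Comb_μ`; in particular the two sets have the same
cardinality. -/
theorem lyndon_comb_bijection
    (n : ℕ) (hn : 1 ≤ n) (μ : ℕ →₀ ℕ) (h0 : μ 0 = 0)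
    (hμ : (μ.sum fun _ m => m) = n - 1) :
    (∃ F : CTree → CTree, Set.BijOn F (LynSet n μ) (CombSet n μ)) ∧
      Nat.card (LynSet n μ) = Nat.card (CombSet n μ) :=
  lyndon_comb_bijection_general n μ
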